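/- arXiv:math/0509378 — 6 statements merged into one kernel-verified Lean document; each statement's English description precedes it below -/
import Mathlib

section
/- The partition poset Π^(2)_7 of partitions of {1,...,7} with all block sizes congruent to 1 mod 2 is not a lattice: the partitions (123)4567 and 1(234)567 have three distinct minimal upper bounds in Π^(2)_7, namely (12345)67, (12346)57, and (12347)56. -/
/-!
Every upper bound of `(123)4567` and `1(234)567` has `1,2,3,4` (in `Fin 7`: `0,1,2,3`) in one block.
In `Π^(2)_7` that block has odd size, so it contains a fifth element `e`, and the upper bound lies
above `blockSetoid {0,1,2,3,e}`. This partition is itself odd, and any odd upper bound below it must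
again contain a five-element block inside `{0,1,2,3,e}`, hence equals it. So the minimal upper
bounds are exactly these three partitions; a least upper bound would lie below two of them and
its block of `0` would be `{0,1,2,3}`, which has even size.
-/

open Classical Set
noncomputable section

/-- The partition of `Fin m` whose only (possibly) non-singleton block is `B`. -/
def blockSetoid {m : ℕ} (B : Set (Fin m)) : Setoid (Fin m) :=
  ⟨fun x y => x = y ∨ (x ∈ B ∧ y ∈ B), by
    refine ⟨fun x => Or.inl rfl, ?_, ?_⟩
    · rintro x y (h | h)
      · exact Or.inl h.symm
      · exact Or.inr ⟨h.2, h.1⟩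
    · rintro x y z (h1 | h1) (h2 | h2)
      · exact Or.inl (h1.trans h2)
      · subst h1; exact Or.inr h2
      · subst h2; exact Or.inr h1
      · exact Or.inr ⟨h1.1, h2.2⟩⟩

/-- `Π^(k)_m`: partitions of `{1,…,m}` all of whose blocks have size ≡ 1 (mod k). -/
def Pik (k m : ℕ) : Set (Setoid (Fin m)) :=
  {s | ∀ c ∈ s.classes, c.ncard ≡ 1 [MOD k]}

/-- `I`: partitions with exactly one non-singleton block (the minimal building set of `Π_m`). -/
def BSI (m : ℕ) : Set (Setoid (Fin m)) :=
  {s | ∃ B : Set (Fin m), 2 ≤ B.ncard ∧ s = blockSetoid B}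

/-- `G`: partitions with exactly one non-singleton block, of size ≡ 1 (mod k). -/
def BSG (k m : ℕ) : Set (Setoid (Fin m)) :=
  {s | ∃ B : Set (Fin m), 2 ≤ B.ncard ∧ B.ncard ≡ 1 [MOD k] ∧ s = blockSetoid B}

/-- `z` is a minimal upper bound of the set `A` within the subposet `P`. -/
def IsMinUB {L : Type*} [PartialOrder L] (P : Set L) (A : Set L) (z : L) : Prop :=
  z ∈ P ∧ (∀ a ∈ A, a ≤ z) ∧ ∀ w ∈ P, (∀ a ∈ A, a ≤ w) → w ≤ z → w = z

/-- Maximal elements of `S` lying below `x`. -/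
def maxBelow {L : Type*} [PartialOrder L] (S : Set L) (x : L) : Set L :=
  {g ∈ S | g ≤ x ∧ ∀ g' ∈ S, g' ≤ x → g ≤ g' → g = g'}

/-- The support of a partition: union of its non-singleton blocks. -/
def suppPart {m : ℕ} (s : Setoid (Fin m)) : Set (Fin m) :=
  {x | ∃ y, x ≠ y ∧ s x y}

section BlockSetoid

variable {m k : ℕ} {A B : Set (Fin m)} {w : Setoid (Fin m)} {x y e e' : Fin m}

theorem blockSetoid_le_iff : blockSetoid B ≤ w ↔ ∀ x ∈ B, ∀ y ∈ B, w x y := by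
  refine ⟨fun h x hx y hy => h (Or.inr ⟨hx, hy⟩), fun h => Setoid.le_def.2 ?_⟩
  rintro x y (rfl | ⟨hx, hy⟩)
  · exact w.refl x
  · exact h x hx y hy

theorem blockSetoid_le_iff_subset_class (hx : x ∈ B) :
    blockSetoid B ≤ w ↔ B ⊆ {y | w y x} := by
  rw [blockSetoid_le_iff]
  exact ⟨fun h y hy => h y hy x hx, fun h y hy z hz => w.trans (h hy) (w.symm (h hz))⟩

theorem blockSetoid_mono (h : A ⊆ B) : blockSetoid A ≤ blockSetoid B :=
  blockSetoid_le_iff.2 fun _ hx _ hy => Or.inr ⟨h hx, h hy⟩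

theorem blockSetoid_union_le_iff (h : (A ∩ B).Nonempty) :
    blockSetoid (A ∪ B) ≤ w ↔ blockSetoid A ≤ w ∧ blockSetoid B ≤ w := by
  obtain ⟨c, hcA, hcB⟩ := h
  rw [blockSetoid_le_iff_subset_class (mem_union_left B hcA),
    blockSetoid_le_iff_subset_class hcA, blockSetoid_le_iff_subset_class hcB, union_subset_iff]

theorem mem_of_blockSetoid_le (h : blockSetoid A ≤ blockSetoid B) (hx : x ∈ A) (hy : y ∈ A)
    (hxy : x ≠ y) : y ∈ B :=
  ((h (Or.inr ⟨hx, hy⟩)).resolve_left hxy).2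

theorem eq_of_blockSetoid_insert_le (hx : x ∈ B) (he : e ∉ B)
    (h : blockSetoid (insert e B) ≤ blockSetoid (insert e' B)) : e = e' :=
  (mem_of_blockSetoid_le h (mem_insert_of_mem e hx) (mem_insert e B)
    (ne_of_mem_of_not_mem hx he)).resolve_right he

theorem eq_or_eq_singleton_of_mem_classes_blockSetoid {c : Set (Fin m)}
    (hc : c ∈ (blockSetoid B).classes) : c = B ∨ ∃ x, c = {x} := by
  obtain ⟨y, rfl⟩ := hc
  by_cases hy : y ∈ B
  · refine Or.inl (ext fun x => ⟨?_, fun hx => Or.inr ⟨hx, hy⟩⟩)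
    rintro (rfl | ⟨hx, -⟩) <;> assumption
  · refine Or.inr ⟨y, ext fun x => ⟨?_, fun hx => Or.inl hx⟩⟩
    rintro (rfl | ⟨-, hy'⟩)
    exacts [rfl, absurd hy' hy]

theorem blockSetoid_mem_Pik (h : B.ncard ≡ 1 [MOD k]) : blockSetoid B ∈ Pik k m := by
  intro c hc
  rcases eq_or_eq_singleton_of_mem_classes_blockSetoid hc with rfl | ⟨x, rfl⟩
  · exact h
  · rw [ncard_singleton]

theorem exists_blockSetoid_insert_le (hw : w ∈ Pik k m) (hB : blockSetoid B ≤ w) (hx : x ∈ B)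
    (hk : ¬ B.ncard ≡ 1 [MOD k]) : ∃ e ∉ B, blockSetoid (insert e B) ≤ w := by
  rw [blockSetoid_le_iff_subset_class hx] at hB
  obtain ⟨e, heC, heB⟩ : ∃ e ∈ {y | w y x}, e ∉ B := by
    by_contra! h
    exact hk (subset_antisymm h hB ▸ hw _ (w.mem_classes x))
  exact ⟨e, heB, (blockSetoid_le_iff_subset_class (mem_insert_of_mem e hx)).2
    (insert_subset heC hB)⟩

theorem eq_blockSetoid_insert_of_le (hw : w ∈ Pik k m) (hB : blockSetoid B ≤ w) (hx : x ∈ B)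
    (hk : ¬ B.ncard ≡ 1 [MOD k]) (hle : w ≤ blockSetoid (insert e B)) :
    w = blockSetoid (insert e B) := by
  obtain ⟨e', he', h'⟩ := exists_blockSetoid_insert_le hw hB hx hk
  obtain rfl := eq_of_blockSetoid_insert_le hx he' (h'.trans hle)
  exact le_antisymm hle h'

theorem not_ncard_modEq_one_of_dvd (hk : 1 < k) (hB : k ∣ B.ncard) : ¬ B.ncard ≡ 1 [MOD k] := by
  rw [Nat.ModEq, Nat.mod_eq_zero_of_dvd hB, Nat.mod_eq_of_lt hk]
  exact zero_ne_one

theorem blockSetoid_insert_mem_Pik (hB : k ∣ B.ncard) (he : e ∉ B) :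
    blockSetoid (insert e B) ∈ Pik k m := by
  apply blockSetoid_mem_Pik
  rw [ncard_insert_of_notMem he (toFinite B)]
  simpa using (Nat.modEq_zero_iff_dvd.2 hB).add_right 1

theorem isMinUB_Pik_iff {S : Set (Setoid (Fin m))} {z : Setoid (Fin m)} (hk : 1 < k)
    (hB : k ∣ B.ncard) (hx : x ∈ B) (hS : ∀ w, (∀ a ∈ S, a ≤ w) ↔ blockSetoid B ≤ w) :
    IsMinUB (Pik k m) S z ↔ ∃ e ∉ B, z = blockSetoid (insert e B) := by
  have hk' := not_ncard_modEq_one_of_dvd hk hB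
  constructor
  · rintro ⟨hz, hub, hmin⟩
    obtain ⟨e, he, hle⟩ := exists_blockSetoid_insert_le hz ((hS z).1 hub) hx hk'
    exact ⟨e, he, (hmin _ (blockSetoid_insert_mem_Pik hB he)
      ((hS _).2 (blockSetoid_mono (subset_insert e B))) hle).symm⟩
  · rintro ⟨e, he, rfl⟩
    exact ⟨blockSetoid_insert_mem_Pik hB he, (hS _).2 (blockSetoid_mono (subset_insert e B)),
      fun w hw hub hle => eq_blockSetoid_insert_of_le hw ((hS w).1 hub) hx hk' hle⟩

theorem not_exists_least_upper_bound_Pik (hk : 1 < k) (hB : k ∣ B.ncard) (hx : x ∈ B)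
    (he : e ∉ B) (he' : e' ∉ B) (hee' : e ≠ e') :
    ¬ ∃ z ∈ Pik k m, blockSetoid B ≤ z ∧ ∀ w ∈ Pik k m, blockSetoid B ≤ w → z ≤ w := by
  rintro ⟨z, hz, hBz, hleast⟩
  obtain ⟨f, hf, hfz⟩ :=
    exists_blockSetoid_insert_le hz hBz hx (not_ncard_modEq_one_of_dvd hk hB)
  have below : ∀ e ∉ B, f = e := fun e he => eq_of_blockSetoid_insert_le hx hf
    (hfz.trans (hleast _ (blockSetoid_insert_mem_Pik hB he)
      (blockSetoid_mono (subset_insert e B))))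
  exact hee' ((below e he).symm.trans (below e' he'))

end BlockSetoid

/-- The poset `Pik 2 7` (partitions of a 7-set with all block sizes odd)
is not a lattice: the partitions `(123)4567` and `1(234)567` have exactly three distinct
minimal upper bounds `(12345)67`, `(12346)57`, `(12347)56`, and no least upper bound. -/
theorem stmt0 :
    let P : Set (Setoid (Fin 7)) := Pik 2 7
    let a := blockSetoid ({0, 1, 2} : Set (Fin 7))
    let b := blockSetoid ({1, 2, 3} : Set (Fin 7))
    let z₁ := blockSetoid ({0, 1, 2, 3, 4} : Set (Fin 7))
    let z₂ := blockSetoid ({0, 1, 2, 3, 5} : Set (Fin 7))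
    let z₃ := blockSetoid ({0, 1, 2, 3, 6} : Set (Fin 7))
    {z | IsMinUB P {a, b} z} = {z₁, z₂, z₃} ∧
    (z₁ ≠ z₂ ∧ z₁ ≠ z₃ ∧ z₂ ≠ z₃) ∧
    ¬ ∃ z ∈ P, a ≤ z ∧ b ≤ z ∧ ∀ w ∈ P, a ≤ w → b ≤ w → z ≤ w := by
  intro P a b z₁ z₂ z₃
  have hins (e : Fin 7) : ({0, 1, 2, 3, e} : Set (Fin 7)) = insert e {0, 1, 2, 3} := by
    ext; simp only [mem_insert_iff, mem_singleton_iff]; tauto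
  have hfifth (e : Fin 7) : e ∉ ({0, 1, 2, 3} : Set (Fin 7)) ↔ e = 4 ∨ e = 5 ∨ e = 6 := by
    fin_cases e <;> simp
  have hB : 2 ∣ ({0, 1, 2, 3} : Set (Fin 7)).ncard := by
    rw [ncard_eq_toFinset_card']
    decide
  have hx : (0 : Fin 7) ∈ ({0, 1, 2, 3} : Set (Fin 7)) := by simp
  have hab (w : Setoid (Fin 7)) : a ≤ w ∧ b ≤ w ↔ blockSetoid ({0, 1, 2, 3} : Set (Fin 7)) ≤ w := by
    rw [← blockSetoid_union_le_iff ⟨1, by simp⟩]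
    congr! 2
    ext; simp only [mem_union, mem_insert_iff, mem_singleton_iff]; tauto
  have hne (e e' : Fin 7) (he : e ∉ ({0, 1, 2, 3} : Set (Fin 7))) (hee' : e ≠ e') :
      blockSetoid (insert e {0, 1, 2, 3}) ≠ blockSetoid (insert e' {0, 1, 2, 3}) :=
    fun h => hee' (eq_of_blockSetoid_insert_le hx he h.le)
  simp only [z₁, z₂, z₃, hins]
  refine ⟨?_, ⟨hne 4 5 (by simp) (by decide), hne 4 6 (by simp) (by decide),
    hne 5 6 (by simp) (by decide)⟩, ?_⟩
  · ext z
    rw [mem_ofPred_eq, isMinUB_Pik_iff (by norm_num) hB hx (by simpa using hab)]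
    simp_rw [hfifth, or_and_right, exists_or, exists_eq_left, mem_insert_iff, mem_singleton_iff]
  · rintro ⟨z, hz, haz, hbz, hleast⟩
    exact not_exists_least_upper_bound_Pik (e := 4) (e' := 5) (by norm_num) hB hx (by simp)
      (by simp) (by decide) ⟨z, hz, (hab z).1 ⟨haz, hbz⟩,
        fun w hw hBw => hleast w hw ((hab w).2 hBw).1 ((hab w).2 hBw).2⟩
end
end

section
/- Let L be a meet-semilattice with a building set G, and let x > y in L. Then for any two incomparable elements z₁ ∈ F(x) and z₂ ∈ F(y), the join z₁ ∨ z₂ exists and does not belong to G; consequently F(x) ∪ F(y) is a G-nested set, and in the face poset of the nested set complex N(L, G), the join of the faces F(x) and F(y) equals F(x) ∪ F(y). -/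
open Classical Set
noncomputable section

/-- The factors of `x` with respect to `G`: the maximal elements of `G` below `x`. -/
def factors {L : Type*} [SemilatticeInf L] [OrderBot L] (G : Set L) (x : L) : Set L :=
  {g ∈ G | g ≤ x ∧ ∀ g' ∈ G, g' ≤ x → g ≤ g' → g = g'}

/-- `G` is a building set of the meet-semilattice `L`: for every `x ≠ ⊥` the interval
`[⊥, x]` is order-isomorphic to the product of the intervals `[⊥, z]` over the factors
`z` of `x`, via a map restricting to the identity on each factor. -/
def IsBuildingSet {L : Type*} [SemilatticeInf L] [OrderBot L] (G : Set L) : Prop :=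
  (⊥ : L) ∉ G ∧ ∀ x : L, x ≠ ⊥ →
    ∃ φ : ((z : factors G x) → Set.Icc (⊥ : L) z.1) ≃o Set.Icc (⊥ : L) x,
      ∀ z : factors G x,
        ((φ (fun w => if h : w = z then ⟨z.1, bot_le, (congrArg Subtype.val h).ge⟩ else ⟨⊥, le_rfl, bot_le⟩) : Set.Icc (⊥ : L) x) : L) = z.1

/-- `N` is a `G`-nested set: `N ⊆ G` and every antichain in `N` of size at least `2`
has a least upper bound in `L` which does not belong to `G`. -/
def IsNestedSet {L : Type*} [SemilatticeInf L] [OrderBot L] (G : Set L) (N : Set L) : Prop :=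
  N ⊆ G ∧ ∀ S : Finset L, ↑S ⊆ N → 2 ≤ S.card →
    (∀ a ∈ S, ∀ b ∈ S, a ≠ b → ¬ a ≤ b) →
    ∃ s, IsLUB (↑S : Set L) s ∧ s ∉ G

/-! The building-set isomorphism `[⊥, x] ≃o ∏_{z ∈ F(x)} [⊥, z]` lets one compute joins below `x`
coordinatewise: joining `b ≤ x` with a set `A` of factors of `x` raises the coordinates indexed
by `A` to their tops, so this join exists and lies below `x`. Doing this first for factors of
`y` (with `b = ⊥`) and then for factors of `x` shows that every subset of `F(x) ∪ F(y)` has a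
join `s ≤ x`. If `s` were in `G`, maximality of factors would make `s` one of the joined
elements, which is impossible for an antichain with at least two elements. -/

theorem Pi.isLUB_insert_image {ι : Type*} {π : ι → Type*} [∀ i, Preorder (π i)]
    (f : ∀ i, π i) (e : ι → ∀ i, π i) (he_top : ∀ i, IsTop (e i i))
    (he_bot : ∀ i j, j ≠ i → IsBot (e i j)) (A : Set ι) :
    IsLUB (insert f (e '' A)) (fun i => if i ∈ A then e i i else f i) := by
  constructor
  · rintro g (rfl | ⟨i, hi, rfl⟩) j
    · dsimp only
      split_ifs
      exacts [he_top j _, le_rfl]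
    · by_cases hji : j = i
      · subst hji
        simp [hi]
      · exact he_bot i j hji _
  · intro g hg j
    by_cases hj : j ∈ A
    · simpa [hj] using hg (mem_insert_of_mem _ ⟨j, hj, rfl⟩) j
    · simpa [hj] using hg (mem_insert _ _) j

theorem IsLUB.val_image_of_Icc_bot {L : Type*} [SemilatticeInf L] [OrderBot L] {x : L}
    {S : Set (Icc (⊥ : L) x)} {s : Icc (⊥ : L) x} (h : IsLUB S s) :
    IsLUB (Subtype.val '' S) (s : L) := by
  refine ⟨by rintro _ ⟨a, ha, rfl⟩; exact h.1 ha, fun v hv => ?_⟩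
  have : s ≤ ⟨v ⊓ x, bot_le, inf_le_right⟩ := h.2 fun a ha => le_inf (hv ⟨a, ha, rfl⟩) a.2.2
  exact le_trans (show (s : L) ≤ v ⊓ x from this) inf_le_left

theorem isLUB_union_of_isLUB_insert {L : Type*} [Preorder L] {A B : Set L} {j s : L}
    (hj : IsLUB B j) (hs : IsLUB (insert j A) s) : IsLUB (A ∪ B) s := by
  rwa [IsLUB, upperBounds_union, hj.upperBounds_eq, inter_comm, ← upperBounds_insert]

section BuildingSet

variable {L : Type*} [SemilatticeInf L] [OrderBot L] {G : Set L}

theorem factors_bot (h : (⊥ : L) ∉ G) : factors G ⊥ = ∅ :=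
  eq_empty_of_forall_notMem fun _ hg => h (le_bot_iff.mp hg.2.1 ▸ hg.1)

namespace IsBuildingSet

theorem exists_isLUB_insert (hG : IsBuildingSet G) {x b : L} {A : Set L}
    (hA : A ⊆ factors G x) (hb : b ≤ x) : ∃ s, IsLUB (insert b A) s ∧ s ≤ x := by
  rcases eq_or_ne x ⊥ with rfl | hx
  · rw [subset_empty_iff.mp (hA.trans (factors_bot hG.1).subset), insert_empty_eq]
    exact ⟨b, isLUB_singleton, hb⟩
  obtain ⟨φ, hφ⟩ := hG.2 x hx
  have hu := Pi.isLUB_insert_image (φ.symm ⟨b, mem_Icc.mpr ⟨bot_le, hb⟩⟩)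
    (fun z w => if h : w = z then ⟨z.1, bot_le, (congrArg Subtype.val h).ge⟩
      else ⟨⊥, le_rfl, bot_le⟩)
    (fun z a => by rw [dif_pos rfl]; exact a.2.2) (fun z w hwz a => by rw [dif_neg hwz]; exact a.2.1)
    (Subtype.val ⁻¹' A)
  have hlub := (φ.isLUB_image'.mpr hu).val_image_of_Icc_bot
  rw [image_insert_eq, image_insert_eq, image_image, image_image, φ.apply_symm_apply] at hlub
  simp only [hφ] at hlub
  rw [Subtype.image_preimage_coe, inter_eq_right.mpr hA] at hlub
  exact ⟨_, hlub, (φ _).2.2⟩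

theorem exists_isLUB_union (hG : IsBuildingSet G) {x y : L} {A B : Set L} (hyx : y ≤ x)
    (hA : A ⊆ factors G x) (hB : B ⊆ factors G y) : ∃ s, IsLUB (A ∪ B) s ∧ s ≤ x := by
  obtain ⟨j, hj, hjy⟩ := hG.exists_isLUB_insert hB (bot_le : ⊥ ≤ y)
  obtain ⟨s, hs, hsx⟩ := hG.exists_isLUB_insert hA (hjy.trans hyx)
  rw [IsLUB, upperBounds_insert, Ici_bot, univ_inter] at hj
  exact ⟨s, isLUB_union_of_isLUB_insert hj hs, hsx⟩

end IsBuildingSet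

theorem mem_of_isLUB_of_subset_factors_union {x y s : L} {S : Set L}
    (hS : S ⊆ factors G x ∪ factors G y) (hne : S.Nonempty) (hs : IsLUB S s) (hsx : s ≤ x)
    (hsG : s ∈ G) : s ∈ S := by
  by_cases hSx : ∃ a ∈ S, a ∈ factors G x
  · obtain ⟨a, haS, ha⟩ := hSx
    exact ha.2.2 s hsG hsx (hs.1 haS) ▸ haS
  · push Not at hSx
    have hSy : S ⊆ factors G y := fun a ha => (hS ha).resolve_left (hSx a ha)
    obtain ⟨a, haS⟩ := hne
    exact (hSy haS).2.2 s hsG (hs.2 fun b hb => (hSy hb).2.1) (hs.1 haS) ▸ haS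

theorem IsBuildingSet.isNestedSet_factors_union (hG : IsBuildingSet G) {x y : L}
    (hyx : y ≤ x) : IsNestedSet G (factors G x ∪ factors G y) := by
  refine ⟨union_subset (fun _ h => h.1) (fun _ h => h.1), fun S hS hcard hanti => ?_⟩
  obtain ⟨s, hs, hsx⟩ : ∃ s, IsLUB (S : Set L) s ∧ s ≤ x := by
    have := hG.exists_isLUB_union hyx (inter_subset_right : ↑S ∩ factors G x ⊆ _)
      (inter_subset_right : ↑S ∩ factors G y ⊆ _)
    rwa [← inter_union_distrib_left, inter_eq_left.mpr hS] at this
  refine ⟨s, hs, fun hsG => ?_⟩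
  have hsS := mem_of_isLUB_of_subset_factors_union hS
    (Finset.coe_nonempty.mpr (Finset.card_pos.mp (by omega))) hs hsx hsG
  have hS_eq : (S : Set L) = {s} :=
    (IsAntichain.greatest_iff fun a ha b hb => hanti a ha b hb).mp ⟨hsS, hs.1⟩
  rw [Finset.coe_eq_singleton] at hS_eq
  simp [hS_eq] at hcard

end BuildingSet

theorem IsNestedSet.exists_isLUB_pair {L : Type*} [SemilatticeInf L] [OrderBot L]
    {G N : Set L} (hN : IsNestedSet G N) {a b : L} (ha : a ∈ N) (hb : b ∈ N) (hab : ¬ a ≤ b)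
    (hba : ¬ b ≤ a) : ∃ s, IsLUB ({a, b} : Set L) s ∧ s ∉ G := by
  have hne : a ≠ b := fun h => hab h.le
  simpa using hN.2 {a, b} (by simp [insert_subset_iff, ha, hb])
    (by rw [Finset.card_pair hne]) (by simp [hab, hba, Ne.symm hne])

/-- If `G` is a building set of the meet-semilattice `L` and `x > y`,
then any two incomparable factors `z₁` of `x` and `z₂` of `y` have a join not in `G`;
consequently `factors G x ∪ factors G y` is `G`-nested, and it is the join of the faces
`factors G x` and `factors G y` in the (inclusion-ordered) face poset of the nested set
complex, i.e. the least nested set containing both. -/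
theorem stmt4 {L : Type*} [SemilatticeInf L] [OrderBot L] {G : Set L}
    (hG : IsBuildingSet G) {x y : L} (hxy : y < x) :
    (∀ z₁ ∈ factors G x, ∀ z₂ ∈ factors G y, ¬ z₁ ≤ z₂ → ¬ z₂ ≤ z₁ →
      ∃ s, IsLUB ({z₁, z₂} : Set L) s ∧ s ∉ G) ∧
    IsNestedSet G (factors G x ∪ factors G y) ∧
    (∀ M : Set L, IsNestedSet G M → factors G x ⊆ M → factors G y ⊆ M →
      factors G x ∪ factors G y ⊆ M) := by
  have hnested := hG.isNestedSet_factors_union hxy.le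
  exact ⟨fun z₁ hz₁ z₂ hz₂ => hnested.exists_isLUB_pair (Or.inl hz₁) (Or.inr hz₂), hnested,
    fun M _ hxM hyM => union_subset hxM hyM⟩
end
end

section
/- Let L be a meet-semilattice with building set G and let N ⊆ G be a nested set. Then for any antichain {x₁,...,x_ℓ} ⊆ N with ℓ ≥ 2, the set of factors of the join satisfies F(x₁ ∨ ... ∨ x_ℓ) = {x₁,...,x_ℓ}. -/
/-!
Under the decomposition `φ : ∏_{z ∈ F(x)} [⊥, z] ≃o [⊥, x]`, meeting with a factor `z` amounts
to keeping only the `z`-coordinate of a tuple. Hence distinct factors meet in `⊥`, every `q ≤ x`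
is the join of its meets with the factors, and `y ↦ y ⊓ z` preserves joins below `x`. An element
`g ∈ G` below `x` that meets a factor `z` nontrivially lies below `z`: in the join `u` of `g` and
`z` inside `[⊥, x]`, every factor other than `z` is disjoint from `z`, hence lies below `g`, hence
equals `g` by maximality, so `z` is the only factor of `u` and `g = g ⊓ z`.

For `s = ⋁ S`, each factor `z` of `s` is therefore the join of the elements of `S` below it, so
by nestedness it is one of them; conversely each element of `S` lies below a factor, which is
then in `S`, and the antichain condition forces equality.
-/
open Classical Set
noncomputable section

section TopAt

variable {ι : Type*} [DecidableEq ι] {π : ι → Type*} [∀ i, SemilatticeInf (π i)]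
  [∀ i, BoundedOrder (π i)]

def topAt (i : ι) : ∀ j, π j := Function.update ⊥ i ⊤

@[simp] lemma topAt_apply_self (i : ι) : topAt (π := π) i i = ⊤ := by simp [topAt]

lemma topAt_apply_of_ne {i j : ι} (h : j ≠ i) : topAt (π := π) i j = ⊥ := by simp [topAt, h]

lemma topAt_inf_topAt {i j : ι} (h : i ≠ j) : topAt (π := π) i ⊓ topAt j = ⊥ := by
  funext k
  by_cases hk : k = i
  · subst hk; simp [topAt_apply_of_ne h]
  · simp [topAt_apply_of_ne hk]

lemma isLUB_range_inf_topAt (τ : ∀ j, π j) : IsLUB (Set.range fun i => τ ⊓ topAt i) τ :=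
  ⟨by rintro _ ⟨i, rfl⟩; exact inf_le_left, fun β hβ i => by
    simpa using hβ ⟨i, rfl⟩ i⟩

lemma inf_topAt_le_iff {σ β : ∀ j, π j} {i : ι} :
    σ ⊓ topAt i ≤ β ↔ σ ≤ Function.update ⊤ i (β i) := by
  refine ⟨fun h => le_update_iff.2 ⟨by simpa using h i, fun j _ => le_top⟩, fun h j => ?_⟩
  by_cases hj : j = i
  · subst hj; simpa using h j
  · simp [topAt_apply_of_ne hj]

lemma le_of_le_update_top {σ τ : ∀ j, π j} {i : ι} (hσ : σ ≤ Function.update τ i ⊤)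
    (hi : σ ⊓ topAt i ≤ τ) : σ ≤ τ := by
  intro j
  by_cases hj : j = i
  · subst hj; simpa using hi j
  · simpa [hj] using hσ j

end TopAt

instance fact_bot_le {α : Type*} [Preorder α] [OrderBot α] {a : α} : Fact (⊥ ≤ a) := ⟨bot_le⟩

section BuildingSet

variable {L : Type*} [SemilatticeInf L] [OrderBot L] {G N : Set L} {x : L}

lemma mem_factors_of_le_of_le {z u : L} (hz : z ∈ factors G x) (hzu : z ≤ u) (hux : u ≤ x) :
    z ∈ factors G u :=
  ⟨hz.1, hzu, fun g hg hgu => hz.2.2 g hg (hgu.trans hux)⟩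

section OrderIso

variable (φ : ((z : factors G x) → Icc (⊥ : L) z.1) ≃o Icc (⊥ : L) x)
  (hφ : ∀ z, (φ (topAt z) : L) = z)
include hφ

lemma coe_orderIso_inf_topAt (σ : (z : factors G x) → Icc (⊥ : L) z.1) (z : factors G x) :
    (φ (σ ⊓ topAt z) : L) = (φ σ : L) ⊓ (z : L) := by
  rw [φ.map_inf, Icc.coe_inf, hφ]

lemma orderIso_symm_inf_topAt_le_iff (y t : Icc (⊥ : L) x) (z : factors G x) :
    φ.symm y ⊓ topAt z ≤ φ.symm t ↔ (y : L) ⊓ z ≤ t := by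
  rw [OrderIso.le_symm_apply, ← Subtype.coe_le_coe, coe_orderIso_inf_topAt φ hφ,
    φ.apply_symm_apply]

end OrderIso

namespace IsBuildingSet

variable (hG : IsBuildingSet G)
include hG

lemma exists_orderIso (hx : x ≠ ⊥) :
    ∃ φ : ((z : factors G x) → Icc (⊥ : L) z.1) ≃o Icc (⊥ : L) x,
      ∀ z, (φ (topAt z) : L) = z := by
  obtain ⟨φ, hφ⟩ := hG.2 x hx
  refine ⟨φ, fun z => ?_⟩
  convert hφ z using 3
  funext w
  by_cases h : w = z
  · subst h; simp [topAt]; rfl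
  · simp [topAt, h]; rfl

lemma ne_bot_of_mem_of_le {g : L} (hg : g ∈ G) (hgx : g ≤ x) : x ≠ ⊥ := by
  rintro rfl
  exact hG.1 (le_bot_iff.1 hgx ▸ hg)

lemma inf_eq_bot_of_mem_factors {z z' : L} (hz : z ∈ factors G x) (hz' : z' ∈ factors G x)
    (hne : z ≠ z') : z ⊓ z' = ⊥ := by
  obtain ⟨φ, hφ⟩ := hG.exists_orderIso (hG.ne_bot_of_mem_of_le hz.1 hz.2.1)
  have := coe_orderIso_inf_topAt φ hφ (topAt ⟨z, hz⟩) ⟨z', hz'⟩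
  rwa [topAt_inf_topAt (by simpa using hne), φ.map_bot, Icc.coe_bot, hφ, eq_comm] at this

lemma isLUB_image_inf_factors (hx : x ≠ ⊥) {q : L} (hq : q ≤ x) :
    IsLUB ((q ⊓ ·) '' factors G x) q := by
  refine ⟨by rintro _ ⟨z, -, rfl⟩; exact inf_le_left, fun b hb => ?_⟩
  obtain ⟨φ, hφ⟩ := hG.exists_orderIso hx
  have : φ.symm ⟨q, bot_le, hq⟩ ≤ φ.symm ⟨b ⊓ x, bot_le, inf_le_right⟩ :=
    (isLUB_range_inf_topAt _).2 <| by
      rintro _ ⟨z, rfl⟩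
      exact (orderIso_symm_inf_topAt_le_iff φ hφ _ _ z).2
        (le_inf (hb ⟨z, z.2, rfl⟩) (inf_le_left.trans hq))
  have hqb : q ≤ b ⊓ x := φ.symm.le_iff_le.1 this
  exact (le_inf_iff.1 hqb).1

lemma isLUB_image_inf_factor {A : Set L} {y z : L} (hA : IsLUB A y) (hyx : y ≤ x)
    (hz : z ∈ factors G x) : IsLUB ((· ⊓ z) '' A) (y ⊓ z) := by
  refine ⟨by rintro _ ⟨a, ha, rfl⟩; exact inf_le_inf_right z (hA.1 ha), fun b hb => ?_⟩
  obtain ⟨φ, hφ⟩ := hG.exists_orderIso (hG.ne_bot_of_mem_of_le hz.1 hz.2.1)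
  set z' : factors G x := ⟨z, hz⟩
  set β := φ.symm ⟨b ⊓ x, bot_le, inf_le_right⟩
  have key : ∀ a (ha : a ≤ x), a ⊓ z ≤ b →
      φ.symm ⟨a, bot_le, ha⟩ ≤ Function.update ⊤ z' (β z') := fun a ha hab =>
    inf_topAt_le_iff.1 <| (orderIso_symm_inf_topAt_le_iff φ hφ _ _ z').2
      (le_inf hab (inf_le_right.trans hz.2.1))
  have hy : y ≤ φ (Function.update ⊤ z' (β z')) := hA.2 fun a ha => by
    have h := φ.monotone (key a ((hA.1 ha).trans hyx) (hb ⟨a, ha, rfl⟩))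
    rwa [φ.apply_symm_apply] at h
  have := (orderIso_symm_inf_topAt_le_iff φ hφ ⟨y, bot_le, hyx⟩ _ z').1
    (inf_topAt_le_iff.2 (φ.symm_apply_le.2 hy))
  exact (le_inf_iff.1 this).1

lemma le_factor_of_inf_ne_bot {g z : L} (hg : g ∈ G) (hgx : g ≤ x) (hz : z ∈ factors G x)
    (hne : g ⊓ z ≠ ⊥) : g ≤ z := by
  obtain ⟨φ, hφ⟩ := hG.exists_orderIso (hG.ne_bot_of_mem_of_le hz.1 hz.2.1)
  set z' : factors G x := ⟨z, hz⟩
  set τ := φ.symm ⟨g, bot_le, hgx⟩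
  set υ := Function.update τ z' ⊤
  -- `u` is the join of `g` and `z` in `[⊥, x]`
  set u : L := ↑(φ υ)
  have hgu : g ≤ u := by
    have h := φ.monotone (le_update_iff.2 ⟨le_top, fun _ _ => le_rfl⟩ : τ ≤ υ)
    rwa [φ.apply_symm_apply] at h
  have hzu : z ≤ u := by
    have h := Subtype.coe_le_coe.2 <| φ.monotone
      (le_update_iff.2 ⟨le_top, fun j hj => by simp [topAt_apply_of_ne hj]⟩ : topAt z' ≤ υ)
    rwa [hφ] at h
  have hzu' : z ∈ factors G u := mem_factors_of_le_of_le hz hzu (φ _).2.2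
  have hv : ∀ v ∈ factors G u, v = z := by
    intro v hv
    by_contra hvz
    have hvz' : v ⊓ z = ⊥ := hG.inf_eq_bot_of_mem_factors hv hzu' hvz
    have hvg : φ.symm ⟨v, bot_le, hv.2.1.trans (φ _).2.2⟩ ≤ τ :=
      le_of_le_update_top (φ.symm_apply_le.2 hv.2.1)
        ((orderIso_symm_inf_topAt_le_iff φ hφ _ _ z').2 (hvz'.trans_le bot_le))
    exact hne (hv.2.2 g hg hgu (φ.symm.le_iff_le.1 hvg) ▸ hvz')
  have := (hG.isLUB_image_inf_factors (hG.ne_bot_of_mem_of_le hz.1 hzu) hgu).2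
    (show g ⊓ z ∈ upperBounds _ by rintro _ ⟨v, hv', rfl⟩; rw [hv v hv'])
  exact this.trans inf_le_right

lemma exists_mem_factors_le {g : L} (hg : g ∈ G) (hgx : g ≤ x) : ∃ z ∈ factors G x, g ≤ z := by
  by_contra! h
  have := (hG.isLUB_image_inf_factors (hG.ne_bot_of_mem_of_le hg hgx) hgx).2
    (show ⊥ ∈ upperBounds _ by
      rintro _ ⟨z, hz, rfl⟩
      exact le_bot_iff.2 <| by_contra fun hne =>
        h z hz (hG.le_factor_of_inf_ne_bot hg hgx hz hne))
  exact hG.1 (le_bot_iff.1 this ▸ hg)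

lemma isLUB_sep_le_of_mem_factors {A : Set L} (hAG : A ⊆ G) (hA : IsLUB A x) {z : L}
    (hz : z ∈ factors G x) : IsLUB {a ∈ A | a ≤ z} z := by
  have := hG.isLUB_image_inf_factor hA le_rfl hz
  rw [inf_eq_right.2 hz.2.1] at this
  refine ⟨fun a ha => ha.2, fun b hb => this.2 ?_⟩
  rintro _ ⟨a, ha, rfl⟩
  by_cases haz : a ≤ z
  · exact inf_le_left.trans (hb ⟨ha, haz⟩)
  · show a ⊓ z ≤ b
    rw [not_not.1 (mt (hG.le_factor_of_inf_ne_bot (hAG ha) (hA.1 ha) hz) haz)]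
    exact bot_le

end IsBuildingSet

lemma IsNestedSet.mem_of_isLUB_mem (hN : IsNestedSet G N) (hbot : ⊥ ∉ G) {T : Finset L}
    (hT : ↑T ⊆ N) (hanti : ∀ a ∈ T, ∀ b ∈ T, a ≠ b → ¬ a ≤ b) {z : L}
    (hz : IsLUB (↑T : Set L) z) (hzG : z ∈ G) : z ∈ T := by
  rcases Nat.lt_or_ge T.card 2 with h | h
  · interval_cases hc : T.card
    · rw [Finset.card_eq_zero.1 hc, Finset.coe_empty, isLUB_empty_iff] at hz
      exact absurd (hz.eq_bot ▸ hzG) hbot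
    · obtain ⟨w, rfl⟩ := Finset.card_eq_one.1 hc
      rw [Finset.coe_singleton] at hz
      simp [hz.unique isLUB_singleton]
  · obtain ⟨s, hs, hsG⟩ := hN.2 T hT h hanti
    exact absurd (hs.unique hz ▸ hzG) hsG

end BuildingSet

theorem stmt5_general {L : Type*} [SemilatticeInf L] [OrderBot L] {G N : Set L}
    (hG : IsBuildingSet G) (hN : IsNestedSet G N)
    (S : Finset L) (hS : ↑S ⊆ N)
    (hanti : ∀ a ∈ S, ∀ b ∈ S, a ≠ b → ¬ a ≤ b)
    (s : L) (hs : IsLUB (↑S : Set L) s) :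
    factors G s = ↑S := by
  have hSG : (↑S : Set L) ⊆ G := hS.trans hN.1
  have hFS : factors G s ⊆ ↑S := fun z hz => by
    have hT : IsLUB (↑(S.filter (· ≤ z)) : Set L) z := by
      rw [Finset.coe_filter]; exact hG.isLUB_sep_le_of_mem_factors hSG hs hz
    exact Finset.filter_subset _ S <| hN.mem_of_isLUB_mem hG.1
      ((Finset.coe_subset.2 (Finset.filter_subset _ _)).trans hS)
      (fun a ha b hb => hanti a (Finset.mem_of_mem_filter a ha) b (Finset.mem_of_mem_filter b hb))
      hT hz.1
  refine hFS.antisymm fun w hw => ?_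
  obtain ⟨z, hz, hwz⟩ := hG.exists_mem_factors_le (hSG hw) (hs.1 hw)
  obtain rfl : w = z := by_contra fun hne => hanti w hw z (hFS hz) hne hwz
  exact hz

/-- If `N` is `G`-nested and `S ⊆ N` is an antichain with at least two
elements, then the factors of the join of `S` are exactly the elements of `S`. -/
theorem stmt5 {L : Type*} [SemilatticeInf L] [OrderBot L] {G N : Set L}
    (hG : IsBuildingSet G) (hN : IsNestedSet G N)
    (S : Finset L) (hS : ↑S ⊆ N) (hcard : 2 ≤ S.card)
    (hanti : ∀ a ∈ S, ∀ b ∈ S, a ≠ b → ¬ a ≤ b)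
    (s : L) (hs : IsLUB (↑S : Set L) s) :
    factors G s = ↑S :=
  stmt5_general hG hN S hS hanti s hs
end
end

section
/- Let N ∈ 𝒩 (a face of the complex of k-trees). Then the poset Σ(N) of all joins of subsets of N is a lattice: it has a top and bottom element, and for a, b ∈ Σ(N), the meet of a and b is given by the join of the antichain max(N_{≤a} ∩ N_{≤b}). -/
open Classical Set
noncomputable section

/-- Membership in the family of faces of the complex of k-trees: `N ⊆ G` and every
antichain in `N` of size at least two has a unique minimal upper bound in `Pik k m`,
which moreover does not lie in `G`. -/
def memN (k m : ℕ) (N : Set (Setoid (Fin m))) : Prop :=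
  N ⊆ BSG k m ∧ ∀ S : Finset (Setoid (Fin m)), ↑S ⊆ N → 2 ≤ S.card →
    (∀ a ∈ S, ∀ b ∈ S, a ≠ b → ¬ a ≤ b) →
    (∃! z, IsMinUB (Pik k m) ↑S z) ∧
      ∀ z, IsMinUB (Pik k m) ↑S z → z ∉ BSG k m

/-- `Σ(N)`: the set of all (unique minimal-upper-bound) joins of subsets of `N` inside
`Pik k m`; the empty join yields the minimal element. -/
def SigmaSet (k m : ℕ) (N : Set (Setoid (Fin m))) : Set (Setoid (Fin m)) :=
  {a | ∃ X ⊆ N, IsMinUB (Pik k m) X a}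

/-!
In a finite poset a unique minimal upper bound is automatically the least one, and a set has
the same upper bounds as its antichain of maximal elements. Hence every `X ⊆ N` has a least upper bound
in `Π^(k)_m`: the bottom if `X = ∅`, the unique maximal element of `X` if there is only one,
and the unique minimal upper bound of the antichain `max X` otherwise. So `Σ(N)` consists of
genuine least upper bounds; the join of `N` is its top, and the join of
`max (N_{≤a} ∩ N_{≤b})` lies below `a` and `b` and above every `d ∈ Σ(N)` below both, since
the generators of such a `d` lie in `N_{≤a} ∩ N_{≤b}`.
-/

instance {α : Type*} [Finite α] : Finite (Setoid α) :=
  Finite.of_injective (fun s : Setoid α => ⇑s) fun _ _ h =>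
    Setoid.ext fun x y => iff_of_eq (congrFun (congrFun h x) y)

section JoinSet

variable {L : Type*} [PartialOrder L]

lemma isMinUB_iff_minimal {P A : Set L} {z : L} :
    IsMinUB P A z ↔ Minimal (· ∈ P ∩ upperBounds A) z :=
  ⟨fun ⟨hP, hub, hmin⟩ => ⟨⟨hP, hub⟩, fun w hw hle => (hmin w hw.1 hw.2 hle).ge⟩,
    fun h => ⟨h.prop.1, h.prop.2, fun _ hP hub hle => h.eq_of_le ⟨hP, hub⟩ hle⟩⟩

lemma IsLeast.isMinUB {P A : Set L} {z : L} (h : IsLeast (P ∩ upperBounds A) z) :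
    IsMinUB P A z :=
  isMinUB_iff_minimal.mpr h.minimal

lemma IsMinUB.eq_of_isLeast {P A : Set L} {a z : L} (ha : IsMinUB P A a)
    (hz : IsLeast (P ∩ upperBounds A) z) : a = z :=
  hz.minimal_iff.mp (isMinUB_iff_minimal.mp ha)

lemma exists_isLeast_of_existsUnique_isMinUB [Finite L] {P A : Set L}
    (h : ∃! z, IsMinUB P A z) : ∃ z, IsLeast (P ∩ upperBounds A) z := by
  obtain ⟨z, hz, huniq⟩ := h
  refine ⟨z, (isMinUB_iff_minimal.mp hz).prop, fun w hw => ?_⟩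
  obtain ⟨v, hvw, hv⟩ := Finite.exists_le_minimal hw
  exact huniq v (isMinUB_iff_minimal.mpr hv) ▸ hvw

lemma upperBounds_setOf_maximal [Finite L] (X : Set L) :
    upperBounds {x | Maximal (· ∈ X) x} = upperBounds X := by
  refine Subset.antisymm (fun w hw x hx => ?_) (upperBounds_mono_set fun _ hx => hx.prop)
  obtain ⟨y, hxy, hy⟩ := X.toFinite.exists_le_maximal hx
  exact hxy.trans (hw hy)

/-- The defining property of the faces `N ∈ 𝒩`, with the ambient poset `Π^(k)_m` replaced by
an arbitrary subposet `P`. -/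
def HasUniqueJoinsOfAntichains (P N : Set L) : Prop :=
  ∀ S : Finset L, ↑S ⊆ N → 2 ≤ S.card → IsAntichain (· ≤ ·) (S : Set L) →
    ∃! z, IsMinUB P S z

/-- `Σ(N)` inside an arbitrary subposet `P`. -/
def joinSet (P N : Set L) : Set L :=
  {a | ∃ X ⊆ N, IsMinUB P X a}

lemma joinSet_subset (P N : Set L) : joinSet P N ⊆ P :=
  fun _ ⟨_, _, ha⟩ => ha.1

variable [OrderBot L] {P N : Set L}

lemma bot_mem_joinSet (hbot : ⊥ ∈ P) : ⊥ ∈ joinSet P N :=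
  ⟨∅, empty_subset N, IsLeast.isMinUB ⟨⟨hbot, by simp⟩, fun _ _ => bot_le⟩⟩

variable [Finite L]

theorem HasUniqueJoinsOfAntichains.exists_isLeast_upperBounds
    (hN : HasUniqueJoinsOfAntichains P N) (hbot : ⊥ ∈ P) (hNP : N ⊆ P) {X : Set L} (hX : X ⊆ N) :
    ∃ z, IsLeast (P ∩ upperBounds X) z := by
  rw [← upperBounds_setOf_maximal X]
  set M := {x | Maximal (· ∈ X) x}
  rcases M.subsingleton_or_nontrivial with hM | hM
  · rcases hM.eq_empty_or_singleton with hM | ⟨g, hM⟩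
    · rw [hM, upperBounds_empty, inter_univ]
      exact ⟨⊥, hbot, fun _ _ => bot_le⟩
    · have hg : g ∈ X := (hM ▸ mem_singleton g : g ∈ M).prop
      rw [hM, upperBounds_singleton]
      exact ⟨g, ⟨hNP (hX hg), le_rfl⟩, fun _ hw => hw.2⟩
  · have hMfin : ((toFinite M).toFinset : Set L) = M := (toFinite M).coe_toFinset
    have hjoin := hN (toFinite M).toFinset (by rw [hMfin]; exact fun _ hx => hX hx.prop)
      (Finset.one_lt_card_iff_nontrivial.mpr (by rwa [Finset.Nontrivial, hMfin]))
      (by rw [hMfin]; exact setOfPred_maximal_antichain _)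
    rw [hMfin] at hjoin
    exact exists_isLeast_of_existsUnique_isMinUB hjoin

theorem HasUniqueJoinsOfAntichains.isLeast_of_isMinUB (hN : HasUniqueJoinsOfAntichains P N)
    (hbot : ⊥ ∈ P) (hNP : N ⊆ P) {X : Set L} (hX : X ⊆ N) {a : L} (ha : IsMinUB P X a) :
    IsLeast (P ∩ upperBounds X) a := by
  obtain ⟨z, hz⟩ := hN.exists_isLeast_upperBounds hbot hNP hX
  rwa [ha.eq_of_isLeast hz]

theorem HasUniqueJoinsOfAntichains.exists_isGreatest_joinSet
    (hN : HasUniqueJoinsOfAntichains P N) (hbot : ⊥ ∈ P) (hNP : N ⊆ P) :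
    ∃ t, IsGreatest (joinSet P N) t := by
  obtain ⟨t, ht⟩ := hN.exists_isLeast_upperBounds hbot hNP subset_rfl
  refine ⟨t, ⟨N, subset_rfl, ht.isMinUB⟩, ?_⟩
  rintro a ⟨X, hXN, ha⟩
  exact (hN.isLeast_of_isMinUB hbot hNP hXN ha).2 ⟨ht.1.1, upperBounds_mono_set hXN ht.1.2⟩

theorem HasUniqueJoinsOfAntichains.exists_meet_joinSet
    (hN : HasUniqueJoinsOfAntichains P N) (hbot : ⊥ ∈ P) (hNP : N ⊆ P) {a b : L} (ha : a ∈ P) (hb : b ∈ P) :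
    ∃ c, IsMinUB P {z | Maximal (· ∈ {w ∈ N | w ≤ a ∧ w ≤ b}) z} c ∧ c ∈ joinSet P N ∧
      c ≤ a ∧ c ≤ b ∧ ∀ d ∈ joinSet P N, d ≤ a → d ≤ b → d ≤ c := by
  set Y := {w ∈ N | w ≤ a ∧ w ≤ b}
  have hMN : {z | Maximal (· ∈ Y) z} ⊆ N := fun _ hz => hz.prop.1
  obtain ⟨c, hc⟩ := hN.exists_isLeast_upperBounds hbot hNP hMN
  have hcY : IsLeast (P ∩ upperBounds Y) c := upperBounds_setOf_maximal Y ▸ hc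
  refine ⟨c, hc.isMinUB, ⟨_, hMN, hc.isMinUB⟩, hcY.2 ⟨ha, fun _ hw => hw.2.1⟩,
    hcY.2 ⟨hb, fun _ hw => hw.2.2⟩, ?_⟩
  rintro d ⟨X, hXN, hd⟩ hda hdb
  have hXY : X ⊆ Y := fun x hx => ⟨hXN hx, (hd.2.1 x hx).trans hda, (hd.2.1 x hx).trans hdb⟩
  exact (hN.isLeast_of_isMinUB hbot hNP hXN hd).2 ⟨hcY.1.1, upperBounds_mono_set hXY hcY.1.2⟩

end JoinSet

lemma setOf_blockSetoid_of_mem {m : ℕ} {B : Set (Fin m)} {y : Fin m} (hy : y ∈ B) :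
    {x | blockSetoid B x y} = B := by
  ext x
  change x = y ∨ (x ∈ B ∧ y ∈ B) ↔ x ∈ B
  aesop

lemma setOf_blockSetoid_of_notMem {m : ℕ} {B : Set (Fin m)} {y : Fin m} (hy : y ∉ B) :
    {x | blockSetoid B x y} = {y} := by
  ext x
  change x = y ∨ (x ∈ B ∧ y ∈ B) ↔ x = y
  aesop

lemma bsg_subset_pik (k m : ℕ) : BSG k m ⊆ Pik k m := by
  rintro s ⟨B, -, hBk, rfl⟩ c ⟨y, rfl⟩
  by_cases hy : y ∈ B
  · rwa [setOf_blockSetoid_of_mem hy]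
  · rw [setOf_blockSetoid_of_notMem hy, ncard_singleton]

lemma bot_mem_pik (k m : ℕ) : (⊥ : Setoid (Fin m)) ∈ Pik k m := by
  rintro c ⟨y, rfl⟩
  have h : {x | (⊥ : Setoid (Fin m)) x y} = {y} := by
    ext x; simp
  rw [h, ncard_singleton]

lemma memN.hasUniqueJoinsOfAntichains {k m : ℕ} {N : Set (Setoid (Fin m))} (hN : memN k m N) :
    HasUniqueJoinsOfAntichains (Pik k m) N :=
  fun S hSN hS ha => (hN.2 S hSN hS ha).1

theorem stmt8_general (k m : ℕ)
    (N : Set (Setoid (Fin m))) (hN : memN k m N) :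
    ((⊥ : Setoid (Fin m)) ∈ SigmaSet k m N ∧ ∀ a ∈ SigmaSet k m N, ⊥ ≤ a) ∧
    (∃ t ∈ SigmaSet k m N, ∀ a ∈ SigmaSet k m N, a ≤ t) ∧
    ∀ a ∈ SigmaSet k m N, ∀ b ∈ SigmaSet k m N,
      ∃ c, IsMinUB (Pik k m)
          {z | z ∈ N ∧ z ≤ a ∧ z ≤ b ∧ ∀ w ∈ N, w ≤ a → w ≤ b → z ≤ w → z = w} c ∧
        c ∈ SigmaSet k m N ∧ c ≤ a ∧ c ≤ b ∧
        ∀ d ∈ SigmaSet k m N, d ≤ a → d ≤ b → d ≤ c := by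
  have hbot := bot_mem_pik k m
  have hNP := hN.1.trans (bsg_subset_pik k m)
  have hjoins := hN.hasUniqueJoinsOfAntichains
  refine ⟨⟨bot_mem_joinSet hbot, fun _ _ => bot_le⟩, hjoins.exists_isGreatest_joinSet hbot hNP,
    fun a ha b hb => ?_⟩
  have hM : {z | z ∈ N ∧ z ≤ a ∧ z ≤ b ∧ ∀ w ∈ N, w ≤ a → w ≤ b → z ≤ w → z = w} =
      {z | Maximal (· ∈ {w ∈ N | w ≤ a ∧ w ≤ b}) z} := by
    ext z
    simp only [maximal_iff, mem_ofPred_eq, and_imp, and_assoc]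
  rw [hM]
  exact hjoins.exists_meet_joinSet hbot hNP (joinSet_subset _ _ ha) (joinSet_subset _ _ hb)

/-- For `N` a face of the complex of k-trees, `Σ(N)` is a lattice: it has
a bottom and a top element, and for `a, b ∈ Σ(N)` the meet of `a` and `b` is the (unique
minimal upper bound) join of the antichain of maximal elements of `N` lying below both. -/
theorem stmt8 (k m : ℕ) (hk : 1 ≤ k) (hm : m ≡ 1 [MOD k])
    (N : Set (Setoid (Fin m))) (hN : memN k m N) :
    ((⊥ : Setoid (Fin m)) ∈ SigmaSet k m N ∧ ∀ a ∈ SigmaSet k m N, ⊥ ≤ a) ∧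
    (∃ t ∈ SigmaSet k m N, ∀ a ∈ SigmaSet k m N, a ≤ t) ∧
    ∀ a ∈ SigmaSet k m N, ∀ b ∈ SigmaSet k m N,
      ∃ c, IsMinUB (Pik k m)
          {z | z ∈ N ∧ z ≤ a ∧ z ≤ b ∧ ∀ w ∈ N, w ≤ a → w ≤ b → z ≤ w → z = w} c ∧
        c ∈ SigmaSet k m N ∧ c ≤ a ∧ c ≤ b ∧
        ∀ d ∈ SigmaSet k m N, d ≤ a → d ≤ b → d ≤ c :=
  stmt8_general k m N hN
end
end

section
/- Let P, Q be finite simplicial complexes and φ : F(P) → F(Q) a poset map between their face posets. Suppose for every face q of Q, the restriction φ_q : φ⁻¹(F(Q)_{≤q}) → F(Q)_{≤q} is the carrier map of a subdivision of the simplex complex Q_q by the subcomplex of P with face poset φ⁻¹(F(Q)_{≤q}), and that the associated vertex maps f⁰_q can be chosen compatibly (agreeing on common vertices for q₁ ≤ q₂). Then φ is the carrier map of a subdivision of Q by P. -/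
open Classical Set
noncomputable section

/-- The geometric realization carried by a family `F` of (finite) vertex sets: points are
the nonnegative finitely-supported weightings summing to `1` whose support lies in `F`. -/
def geomF {V : Type*} (F : Set (Set V)) : Set (V → ℝ) :=
  {w | (∀ v, 0 ≤ w v) ∧ (Function.support w).Finite ∧ ∑ᶠ v, w v = 1 ∧
        Function.support w ∈ F}

/-- `F` is (the face family of) an abstract simplicial complex: faces are nonempty finite
sets, closed under passing to nonempty subsets. -/
def IsComplexF {V : Type*} (F : Set (Set V)) : Prop :=
  ∀ s ∈ F, s.Nonempty ∧ s.Finite ∧ ∀ t ⊆ s, t.Nonempty → t ∈ F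

/-- The closed cell of a simplex `s`: all points supported on a nonempty subset of `s`. -/
def closedCell {V : Type*} (s : Set V) : Set (V → ℝ) :=
  geomF {t | t ⊆ s ∧ t.Nonempty}

/-- The open cell of a simplex `s`: all points supported on exactly `s`. -/
def openCell {V : Type*} (s : Set V) : Set (V → ℝ) :=
  geomF {s}

/-- The linear extension of a vertex map `f0 : V → |Q|` to the realization. -/
def linExt {V W : Type*} (f0 : V → W → ℝ) (w : V → ℝ) : W → ℝ :=
  fun u => ∑ᶠ v, w v * f0 v u

/-- `P` is a subdivision of `Q` with carrier map `φ` and vertex map `f0`: `φ` is a poset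
map of face posets, each vertex of a face `p` is sent into the closed cell of `φ p`, and
the linear extension of `f0` restricts to a homeomorphism of realizations. -/
def IsSubdivOn {V W : Type*} (P : Set (Set V)) (Q : Set (Set W))
    (φ : Set V → Set W) (f0 : V → W → ℝ) : Prop :=
  (∀ p ∈ P, φ p ∈ Q) ∧
  (∀ p ∈ P, ∀ p' ∈ P, p' ⊆ p → φ p' ⊆ φ p) ∧
  (∀ p ∈ P, ∀ v ∈ p, f0 v ∈ closedCell (φ p)) ∧
  ∃ h : (geomF P) ≃ₜ (geomF Q), ∀ w : geomF P, (h w : W → ℝ) = linExt f0 (w : V → ℝ)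

/-!
Glue the vertex maps of the local subdivisions into `f0 v := f (φ {v}) v`; compatibility makes
the linear extension of `f0` agree with that of `f q` over every `P_q := {p ∈ P | φ p ⊆ q}`,
so it maps each `|P_q|` bijectively onto the closed cell of `q`. These pieces cover `|P|` and
`|Q|`, and they glue to a bijection because a point `y` of `|Q|` lies in the cell of its own
support `q₀`, and `|P_{q₀}|` sits inside every `|P_q|` whose cell contains `y`. A continuous
bijection from the compact `|P|` onto the Hausdorff `|Q|` is a homeomorphism.
-/

namespace Set

theorem bijOn_biUnion_of_monotone {X Y ι : Type*} [Preorder ι] {g : X → Y}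
    {I : Set ι} {A : ι → Set X} {B : ι → Set Y} (m : Y → ι)
    (hbij : ∀ i ∈ I, BijOn g (A i) (B i))
    (hA : ∀ i ∈ I, ∀ j ∈ I, i ≤ j → A i ⊆ A j)
    (hm : ∀ i ∈ I, ∀ y ∈ B i, m y ∈ I ∧ m y ≤ i ∧ y ∈ B (m y)) :
    BijOn g (⋃ i ∈ I, A i) (⋃ i ∈ I, B i) := by
  refine ⟨?_, ?_, ?_⟩
  · simp only [MapsTo, mem_iUnion₂]
    rintro x ⟨i, hi, hx⟩
    exact ⟨i, hi, (hbij i hi).mapsTo hx⟩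
  · simp only [InjOn, mem_iUnion₂]
    rintro x₁ ⟨i, hi, hx₁⟩ x₂ ⟨j, hj, hx₂⟩ hg
    have hyi := (hbij i hi).mapsTo hx₁
    have hyj := (hbij j hj).mapsTo hx₂
    rw [hg] at hyi
    obtain ⟨hk, hki, hyk⟩ := hm i hi _ hyi
    have hkj := (hm j hj _ hyj).2.1
    obtain ⟨x, hx, hgx⟩ := (hbij _ hk).surjOn hyk
    have h₁ : x₁ = x := (hbij i hi).injOn hx₁ (hA _ hk i hi hki hx) (hg.trans hgx.symm)
    have h₂ : x₂ = x := (hbij j hj).injOn hx₂ (hA _ hk j hj hkj hx) hgx.symm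
    rw [h₁, h₂]
  · simp only [SurjOn, subset_def, mem_iUnion₂, mem_image]
    rintro y ⟨i, hi, hy⟩
    obtain ⟨x, hx, rfl⟩ := (hbij i hi).surjOn hy
    exact ⟨x, ⟨i, hi, hx⟩, rfl⟩

end Set

theorem exists_homeomorph_of_bijOn {X Y : Type*} [TopologicalSpace X] [TopologicalSpace Y]
    [T2Space Y] {s : Set X} {t : Set Y} {g : X → Y} (hs : IsCompact s) (hg : ContinuousOn g s)
    (hbij : BijOn g s t) : ∃ h : s ≃ₜ t, ∀ x : s, (h x : Y) = g x := by
  have : CompactSpace s := isCompact_iff_compactSpace.mp hs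
  have hcont : Continuous (hbij.equiv g) := hg.domRestrict.subtype_mk _
  exact ⟨hcont.homeoOfEquivCompactToT2, fun _ => rfl⟩

section Realization

variable {V W : Type*}

theorem geomF_mono {F G : Set (Set V)} (h : F ⊆ G) : geomF F ⊆ geomF G :=
  fun _ ⟨h0, hfin, hsum, hF⟩ => ⟨h0, hfin, hsum, h hF⟩

theorem mem_closedCell_support {w : V → ℝ} {s : Set V} (hw : w ∈ closedCell s) :
    w ∈ closedCell (Function.support w) :=
  ⟨hw.1, hw.2.1, hw.2.2.1, subset_rfl, hw.2.2.2.2⟩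

theorem closedCell_subset_geomF {F : Set (Set V)} (hF : IsComplexF F) {s : Set V} (hs : s ∈ F) :
    closedCell s ⊆ geomF F :=
  fun _ ⟨h0, hfin, hsum, hsub, hne⟩ => ⟨h0, hfin, hsum, (hF s hs).2.2 _ hsub hne⟩

theorem geomF_eq_biUnion_closedCell {F : Set (Set V)} (hF : IsComplexF F) :
    geomF F = ⋃ s ∈ F, closedCell s := by
  refine Subset.antisymm (fun w hw => mem_biUnion hw.2.2.2 ?_)
    (iUnion₂_subset fun s hs => closedCell_subset_geomF hF hs)
  exact ⟨hw.1, hw.2.1, hw.2.2.1, subset_rfl, (hF _ hw.2.2.2).1⟩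

theorem closedCell_eq_stdSimplex_inter [Fintype V] (s : Set V) :
    closedCell s = stdSimplex ℝ V ∩ {w | ∀ v ∉ s, w v = 0} := by
  ext w
  simp only [closedCell, geomF, mem_ofPred_eq, mem_inter_iff, stdSimplex,
    finsum_eq_sum_of_fintype, Function.support_subset_iff']
  constructor
  · rintro ⟨h0, -, hsum, hsub, -⟩
    exact ⟨⟨h0, hsum⟩, hsub⟩
  · rintro ⟨⟨h0, hsum⟩, hsub⟩
    obtain ⟨v, -, hv⟩ := Finset.exists_ne_zero_of_sum_ne_zero (hsum.symm ▸ one_ne_zero)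
    exact ⟨h0, toFinite _, hsum, hsub, v, hv⟩

theorem isCompact_closedCell [Finite V] (s : Set V) : IsCompact (closedCell s) := by
  have := Fintype.ofFinite V
  rw [closedCell_eq_stdSimplex_inter]
  refine (isCompact_stdSimplex ℝ V).inter_right ?_
  simp only [ofPred_forall]
  exact isClosed_iInter fun v => isClosed_iInter fun _ =>
    isClosed_eq (continuous_apply v) continuous_const

theorem isCompact_geomF [Finite V] {F : Set (Set V)} (hF : IsComplexF F) :
    IsCompact (geomF F) := by
  rw [geomF_eq_biUnion_closedCell hF]
  exact F.toFinite.isCompact_biUnion fun s _ => isCompact_closedCell s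

theorem geomF_eq_biUnion_preimage {P : Set (Set V)} {Q : Set (Set W)} {φ : Set V → Set W}
    (hφ : ∀ p ∈ P, φ p ∈ Q) : geomF P = ⋃ q ∈ Q, geomF {p ∈ P | φ p ⊆ q} := by
  refine Subset.antisymm (fun w hw => mem_biUnion (hφ _ hw.2.2.2) ?_)
    (iUnion₂_subset fun q _ => geomF_mono (sep_subset _ _))
  exact ⟨hw.1, hw.2.1, hw.2.2.1, hw.2.2.2, subset_rfl⟩

theorem continuous_linExt [Finite V] (f0 : V → W → ℝ) : Continuous (linExt f0) := by
  have := Fintype.ofFinite V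
  refine continuous_pi fun u => ?_
  simp only [linExt, finsum_eq_sum_of_fintype]
  exact continuous_finsetSum _ fun v _ => (continuous_apply v).mul continuous_const

theorem linExt_eqOn_geomF {F : Set (Set V)} {f g : V → W → ℝ}
    (h : ∀ s ∈ F, ∀ v ∈ s, f v = g v) : EqOn (linExt f) (linExt g) (geomF F) := by
  rintro w ⟨-, -, -, hw⟩
  funext u
  refine finsum_congr fun v => ?_
  by_cases hv : w v = 0
  · simp [hv]
  · rw [h _ hw v hv]

theorem IsSubdivOn.bijOn {P : Set (Set V)} {Q : Set (Set W)} {φ : Set V → Set W}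
    {f0 : V → W → ℝ} (h : IsSubdivOn P Q φ f0) : BijOn (linExt f0) (geomF P) (geomF Q) := by
  obtain ⟨-, -, -, e, he⟩ := h
  refine ⟨fun w hw => he ⟨w, hw⟩ ▸ (e ⟨w, hw⟩).2, fun w₁ hw₁ w₂ hw₂ hw => ?_, fun y hy => ?_⟩
  · have := e.injective (Subtype.ext ((he ⟨w₁, hw₁⟩).trans (hw.trans (he ⟨w₂, hw₂⟩).symm)))
    exact congrArg Subtype.val this
  · obtain ⟨w, hw⟩ := e.surjective ⟨y, hy⟩
    exact ⟨w, w.2, (he w).symm.trans (congrArg Subtype.val hw)⟩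

end Realization

theorem stmt13_general {V W : Type*} [Finite V]
    (P : Set (Set V)) (Q : Set (Set W)) (hP : IsComplexF P) (hQ : IsComplexF Q)
    (φ : Set V → Set W)
    (hφ : ∀ p ∈ P, φ p ∈ Q)
    (hmono : ∀ p ∈ P, ∀ p' ∈ P, p' ⊆ p → φ p' ⊆ φ p)
    (f : Set W → V → W → ℝ)
    (hsub : ∀ q ∈ Q, IsSubdivOn {p ∈ P | φ p ⊆ q} {t | t ⊆ q ∧ t.Nonempty} φ (f q))
    (hcompat : ∀ q₁ ∈ Q, ∀ q₂ ∈ Q, q₁ ⊆ q₂ →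
      ∀ v : V, (∃ p ∈ P, v ∈ p ∧ φ p ⊆ q₁) → f q₁ v = f q₂ v) :
    ∃ f0 : V → W → ℝ, IsSubdivOn P Q φ f0 := by
  set f0 : V → W → ℝ := fun v => f (φ {v}) v
  have hf0 : ∀ q ∈ Q, ∀ p ∈ {p ∈ P | φ p ⊆ q}, ∀ v ∈ p, f0 v = f q v := by
    rintro q hq p ⟨hp, hpq⟩ v hv
    have hv' : {v} ⊆ p := singleton_subset_iff.mpr hv
    have hvP : {v} ∈ P := (hP p hp).2.2 _ hv' (singleton_nonempty v)
    exact hcompat _ (hφ _ hvP) q hq ((hmono p hp _ hvP hv').trans hpq) v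
      ⟨{v}, hvP, rfl, subset_rfl⟩
  have hloc : ∀ q ∈ Q, BijOn (linExt f0) (geomF {p ∈ P | φ p ⊆ q}) (closedCell q) :=
    fun q hq => (hsub q hq).bijOn.congr (linExt_eqOn_geomF (hf0 q hq)).symm
  have hbij : BijOn (linExt f0) (geomF P) (geomF Q) := by
    rw [geomF_eq_biUnion_preimage hφ, geomF_eq_biUnion_closedCell hQ]
    refine bijOn_biUnion_of_monotone Function.support hloc
      (fun q _ q' _ hqq' => geomF_mono fun p hp => ⟨hp.1, hp.2.trans hqq'⟩) ?_
    intro q hq y hy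
    exact ⟨(hQ q hq).2.2 _ hy.2.2.2.1 hy.2.2.2.2, hy.2.2.2.1, mem_closedCell_support hy⟩
  refine ⟨f0, hφ, hmono, fun p hp v hv => ?_, exists_homeomorph_of_bijOn (isCompact_geomF hP)
    (continuous_linExt f0).continuousOn hbij⟩
  rw [hf0 _ (hφ p hp) p ⟨hp, subset_rfl⟩ v hv]
  exact (hsub _ (hφ p hp)).2.2.1 p ⟨hp, subset_rfl⟩ v hv

/-- If, for each face `q` of `Q`, the restriction of the poset map `φ`
over the subcomplex below `q` is the carrier map of a subdivision of the simplex on `q`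
(with vertex maps chosen compatibly: agreeing on common vertices for nested faces), then
`φ` is the carrier map of a subdivision of `Q` by `P`. -/
theorem stmt13 {V W : Type*} [Finite V] [Finite W]
    (P : Set (Set V)) (Q : Set (Set W)) (hP : IsComplexF P) (hQ : IsComplexF Q)
    (φ : Set V → Set W)
    (hφ : ∀ p ∈ P, φ p ∈ Q)
    (hmono : ∀ p ∈ P, ∀ p' ∈ P, p' ⊆ p → φ p' ⊆ φ p)
    (f : Set W → V → W → ℝ)
    (hsub : ∀ q ∈ Q, IsSubdivOn {p ∈ P | φ p ⊆ q} {t | t ⊆ q ∧ t.Nonempty} φ (f q))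
    (hcompat : ∀ q₁ ∈ Q, ∀ q₂ ∈ Q, q₁ ⊆ q₂ →
      ∀ v : V, (∃ p ∈ P, v ∈ p ∧ φ p ⊆ q₁) → f q₁ v = f q₂ v) :
    ∃ f0 : V → W → ℝ, IsSubdivOn P Q φ f0 :=
  stmt13_general P Q hP hQ φ hφ hmono f hsub hcompat
end
end

section
/- For every chain ω in Π^(k)_m (a face of the order complex Δ(Π^(k)_m)), the set F^k(ω) = ⋃_{x ∈ ω} max G_{≤x} is a face of the complex of k-trees; that is, F^k(ω) ∈ 𝒩. -/
/-! Each factor of a member `x` of the chain is `blockSetoid B` for a block `B` of `x` with at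
least two elements. Blocks of comparable partitions are nested or disjoint, so the supports of
an antichain of factors are pairwise disjoint. The partition whose non-singleton blocks are
exactly these supports is then the least upper bound of the antichain among all partitions; it
lies in `Pik k m` (its blocks are the supports and singletons) and, having at least two
non-singleton blocks, not in `BSG k m`. -/

open Classical Set
noncomputable section

lemma IsLUB.eq_of_isMinUB {L : Type*} [PartialOrder L] {P A : Set L} {z w : L}
    (hz : IsLUB A z) (hzP : z ∈ P) (hw : IsMinUB P A w) : w = z :=
  (hw.2.2 z hzP hz.1 (hz.2 hw.2.1)).symm

lemma IsLUB.existsUnique_isMinUB {L : Type*} [PartialOrder L] {P A : Set L} {z : L}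
    (hz : IsLUB A z) (hzP : z ∈ P) : ∃! w, IsMinUB P A w :=
  ⟨z, ⟨hzP, hz.1, fun _ _ hw hwz => le_antisymm hwz (hz.2 hw)⟩,
    fun _ hw => hz.eq_of_isMinUB hzP hw⟩

lemma Setoid.subset_of_mem_classes_of_le {α : Type*} {x x' : Setoid α} (h : x ≤ x')
    {B B' : Set α} (hB : B ∈ x.classes) (hB' : B' ∈ x'.classes) (hne : (B ∩ B').Nonempty) :
    B ⊆ B' := by
  obtain ⟨y, rfl⟩ := hB
  obtain ⟨y', rfl⟩ := hB'
  obtain ⟨c, hc, hc'⟩ := hne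
  exact fun a ha => x'.trans (Setoid.le_def.mp h (x.trans ha (x.symm hc))) hc'

section Blocks

variable {m : ℕ}

lemma suppPart_blockSetoid {B : Set (Fin m)} (hB : 2 ≤ B.ncard) :
    suppPart (blockSetoid B) = B := by
  ext a
  constructor
  · rintro ⟨b, hab, h | h⟩
    · exact absurd h hab
    · exact h.1
  · intro ha
    obtain ⟨b, hb, hba⟩ := Set.exists_ne_of_one_lt_ncard hB a
    exact ⟨b, hba.symm, Or.inr ⟨ha, hb⟩⟩

lemma blockSetoid_mono_s15 {B C : Set (Fin m)} (h : B ⊆ C) : blockSetoid B ≤ blockSetoid C := by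
  rw [Setoid.le_def]
  rintro a b (rfl | ⟨ha, hb⟩)
  · exact Or.inl rfl
  · exact Or.inr ⟨h ha, h hb⟩

lemma blockSetoid_le_of_mem_classes {x : Setoid (Fin m)} {C : Set (Fin m)}
    (hC : C ∈ x.classes) : blockSetoid C ≤ x := by
  obtain ⟨c, rfl⟩ := hC
  rw [Setoid.le_def]
  rintro a b (rfl | ⟨ha, hb⟩)
  · exact x.refl a
  · exact x.trans ha (x.symm hb)

lemma subset_setOf_rel_of_blockSetoid_le {x : Setoid (Fin m)} {B : Set (Fin m)}
    (h : blockSetoid B ≤ x) {a : Fin m} (ha : a ∈ B) : B ⊆ {b | x b a} :=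
  fun _ hb => Setoid.le_def.mp h (Or.inr ⟨hb, ha⟩)

lemma exists_mem_classes_of_mem_maxBelow {k : ℕ} {x g : Setoid (Fin m)} (hx : x ∈ Pik k m)
    (hg : g ∈ maxBelow (BSG k m) x) :
    ∃ B ∈ x.classes, 2 ≤ B.ncard ∧ g = blockSetoid B := by
  obtain ⟨⟨B, hB2, -, rfl⟩, hle, hmax⟩ := hg
  obtain ⟨a, ha⟩ := Set.nonempty_of_ncard_ne_zero (by omega : B.ncard ≠ 0)
  have hC : {b | x b a} ∈ x.classes := Setoid.mem_classes x a
  have hBC := subset_setOf_rel_of_blockSetoid_le hle ha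
  have hC2 : 2 ≤ {b | x b a}.ncard := hB2.trans (Set.ncard_le_ncard hBC)
  have heq : blockSetoid B = blockSetoid {b | x b a} :=
    hmax _ ⟨_, hC2, hx _ hC, rfl⟩ (blockSetoid_le_of_mem_classes hC) (blockSetoid_mono_s15 hBC)
  have hBeq : B = {b | x b a} := by
    rw [← suppPart_blockSetoid hB2, heq, suppPart_blockSetoid hC2]
  exact ⟨B, hBeq ▸ hC, hB2, rfl⟩

lemma exists_mem_classes_of_mem_factors {k : ℕ} {ω : Set (Setoid (Fin m))}
    (hω : ω ⊆ Pik k m) {g : Setoid (Fin m)} (hg : g ∈ ⋃ x ∈ ω, maxBelow (BSG k m) x) :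
    2 ≤ (suppPart g).ncard ∧ g = blockSetoid (suppPart g) ∧
      ∃ x ∈ ω, suppPart g ∈ x.classes := by
  obtain ⟨x, hxω, hgx⟩ := Set.mem_iUnion₂.mp hg
  obtain ⟨B, hB, hB2, rfl⟩ := exists_mem_classes_of_mem_maxBelow (hω hxω) hgx
  rw [suppPart_blockSetoid hB2]
  exact ⟨hB2, rfl, x, hxω, hB⟩

lemma pairwiseDisjoint_suppPart_of_isAntichain {k : ℕ} {ω : Set (Setoid (Fin m))}
    (hω : ω ⊆ Pik k m) (hchain : IsChain (· ≤ ·) ω) {S : Set (Setoid (Fin m))}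
    (hS : S ⊆ ⋃ x ∈ ω, maxBelow (BSG k m) x) (hanti : IsAntichain (· ≤ ·) S) :
    (suppPart '' S).PairwiseDisjoint id := by
  have nested : ∀ g ∈ S, ∀ g' ∈ S, (suppPart g ∩ suppPart g').Nonempty → g ≤ g' ∨ g' ≤ g := by
    intro g hg g' hg' hne
    obtain ⟨-, hg_eq, x, hx, hBx⟩ := exists_mem_classes_of_mem_factors hω (hS hg)
    obtain ⟨-, hg'_eq, x', hx', hBx'⟩ := exists_mem_classes_of_mem_factors hω (hS hg')
    rw [hg_eq, hg'_eq]
    rcases hchain.total hx hx' with h | h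
    · exact .inl (blockSetoid_mono_s15 (Setoid.subset_of_mem_classes_of_le h hBx hBx' hne))
    · exact .inr (blockSetoid_mono_s15
        (Setoid.subset_of_mem_classes_of_le h hBx' hBx (Set.inter_comm _ _ ▸ hne)))
  rintro _ ⟨g, hg, rfl⟩ _ ⟨g', hg', rfl⟩ hne
  have hgg' : g ≠ g' := fun h => hne (h ▸ rfl)
  rw [Function.onFun, Set.disjoint_iff_inter_eq_empty, ← Set.not_nonempty_iff_eq_empty]
  intro hint
  rcases nested g hg g' hg' hint with h | h
  · exact hanti hg hg' hgg' h
  · exact hanti hg' hg hgg'.symm h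

end Blocks

def disjointBlocksSetoid {α : Type*} (𝓑 : Set (Set α)) (h𝓑 : 𝓑.PairwiseDisjoint id) :
    Setoid α where
  r a b := a = b ∨ ∃ B ∈ 𝓑, a ∈ B ∧ b ∈ B
  iseqv := by
    refine ⟨fun a => .inl rfl, ?_, ?_⟩
    · rintro a b (rfl | ⟨B, hB, ha, hb⟩)
      · exact .inl rfl
      · exact .inr ⟨B, hB, hb, ha⟩
    · rintro a b c (rfl | ⟨B, hB, ha, hb⟩) (rfl | ⟨B', hB', hb', hc⟩)
      · exact .inl rfl
      · exact .inr ⟨B', hB', hb', hc⟩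
      · exact .inr ⟨B, hB, ha, hb⟩
      · exact .inr ⟨B, hB, ha, h𝓑.elim_set hB' hB b hb' hb ▸ hc⟩

section DisjointBlocks

variable {α : Type*} {𝓑 : Set (Set α)} (h𝓑 : 𝓑.PairwiseDisjoint id)
include h𝓑

lemma setOf_disjointBlocksSetoid_eq_of_mem {B : Set α} (hB : B ∈ 𝓑) {y : α} (hy : y ∈ B) :
    {a | disjointBlocksSetoid 𝓑 h𝓑 a y} = B := by
  ext a
  constructor
  · rintro (rfl | ⟨B', hB', ha, hy'⟩)
    · exact hy
    · exact h𝓑.elim_set hB' hB y hy' hy ▸ ha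
  · exact fun ha => .inr ⟨B, hB, ha, hy⟩

lemma setOf_disjointBlocksSetoid_eq_singleton {y : α} (hy : ∀ B ∈ 𝓑, y ∉ B) :
    {a | disjointBlocksSetoid 𝓑 h𝓑 a y} = {y} := by
  ext a
  constructor
  · rintro (rfl | ⟨B, hB, -, hy'⟩)
    · rfl
    · exact absurd hy' (hy B hB)
  · rintro rfl
    exact .inl rfl

end DisjointBlocks

section DisjointBlocksFin

variable {m : ℕ} {𝓑 : Set (Set (Fin m))} (h𝓑 : 𝓑.PairwiseDisjoint id)
include h𝓑

lemma isLUB_disjointBlocksSetoid :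
    IsLUB (blockSetoid '' 𝓑) (disjointBlocksSetoid 𝓑 h𝓑) := by
  constructor
  · rintro _ ⟨B, hB, rfl⟩
    rw [Setoid.le_def]
    rintro a b (rfl | ⟨ha, hb⟩)
    · exact .inl rfl
    · exact .inr ⟨B, hB, ha, hb⟩
  · intro w hw
    rw [Setoid.le_def]
    rintro a b (rfl | ⟨B, hB, ha, hb⟩)
    · exact w.refl a
    · exact Setoid.le_def.mp (hw ⟨B, hB, rfl⟩) (Or.inr ⟨ha, hb⟩)

lemma disjointBlocksSetoid_mem_Pik {k : ℕ} (hk : ∀ B ∈ 𝓑, B.ncard ≡ 1 [MOD k]) :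
    disjointBlocksSetoid 𝓑 h𝓑 ∈ Pik k m := by
  rintro _ ⟨y, rfl⟩
  by_cases hy : ∃ B ∈ 𝓑, y ∈ B
  · obtain ⟨B, hB, hyB⟩ := hy
    rw [setOf_disjointBlocksSetoid_eq_of_mem h𝓑 hB hyB]
    exact hk B hB
  · simp only [not_exists, not_and] at hy
    rw [setOf_disjointBlocksSetoid_eq_singleton h𝓑 hy, Set.ncard_singleton]

lemma disjointBlocksSetoid_notMem_BSG {k : ℕ} {B₁ B₂ : Set (Fin m)} (hB₁ : B₁ ∈ 𝓑)
    (hB₂ : B₂ ∈ 𝓑) (hne : B₁ ≠ B₂) (h₁ : 2 ≤ B₁.ncard) (h₂ : 2 ≤ B₂.ncard) :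
    disjointBlocksSetoid 𝓑 h𝓑 ∉ BSG k m := by
  rintro ⟨C, -, -, hC⟩
  have subset_C : ∀ B ∈ 𝓑, 2 ≤ B.ncard → B ⊆ C := by
    intro B hB h2 a ha
    obtain ⟨b, hb, hba⟩ := Set.exists_ne_of_one_lt_ncard h2 a
    have hab : blockSetoid C a b := hC ▸ Or.inr ⟨B, hB, ha, hb⟩
    exact hab.resolve_left hba.symm |>.1
  obtain ⟨a, ha⟩ := Set.nonempty_of_ncard_ne_zero (by omega : B₁.ncard ≠ 0)
  obtain ⟨b, hb⟩ := Set.nonempty_of_ncard_ne_zero (by omega : B₂.ncard ≠ 0)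
  have hab : disjointBlocksSetoid 𝓑 h𝓑 a b :=
    hC ▸ Or.inr ⟨subset_C B₁ hB₁ h₁ ha, subset_C B₂ hB₂ h₂ hb⟩
  rcases hab with rfl | ⟨B, hB, haB, hbB⟩
  · exact hne (h𝓑.elim_set hB₁ hB₂ a ha hb)
  · exact hne ((h𝓑.elim_set hB₁ hB a ha haB).trans (h𝓑.elim_set hB hB₂ b hbB hb))

end DisjointBlocksFin

theorem stmt15_general (k m : ℕ)
    (ω : Set (Setoid (Fin m))) (hω : ω ⊆ Pik k m) (hchain : IsChain (· ≤ ·) ω) :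
    memN k m (⋃ x ∈ ω, maxBelow (BSG k m) x) := by
  refine ⟨Set.iUnion₂_subset fun _ _ => Set.sep_subset _ _, fun S hS hcard hanti => ?_⟩
  have hfac := fun g (hg : g ∈ S) => exists_mem_classes_of_mem_factors hω (hS hg)
  have h𝓑 := pairwiseDisjoint_suppPart_of_isAntichain hω hchain hS
    fun a ha b hb hab => hanti a ha b hb hab
  have hlub : IsLUB (S : Set (Setoid (Fin m))) (disjointBlocksSetoid _ h𝓑) := by
    have hS_eq : blockSetoid '' (suppPart '' (S : Set (Setoid (Fin m)))) = S := by
      rw [Set.image_image]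
      exact (Set.image_congr fun g hg => ((hfac g hg).2.1).symm).trans (Set.image_id' _)
    simpa only [hS_eq] using isLUB_disjointBlocksSetoid h𝓑
  have hPik : disjointBlocksSetoid _ h𝓑 ∈ Pik k m := by
    refine disjointBlocksSetoid_mem_Pik h𝓑 ?_
    rintro _ ⟨g, hg, rfl⟩
    obtain ⟨x, hx, hBx⟩ := (hfac g hg).2.2
    exact hω hx _ hBx
  obtain ⟨g₁, hg₁, g₂, hg₂, hne⟩ := Finset.one_lt_card.mp hcard
  have hBSG : disjointBlocksSetoid _ h𝓑 ∉ BSG k m :=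
    disjointBlocksSetoid_notMem_BSG h𝓑 ⟨g₁, hg₁, rfl⟩ ⟨g₂, hg₂, rfl⟩
      (fun h => hne (by rw [(hfac g₁ hg₁).2.1, (hfac g₂ hg₂).2.1, h]))
      (hfac g₁ hg₁).1 (hfac g₂ hg₂).1
  exact ⟨hlub.existsUnique_isMinUB hPik, fun z hz => hlub.eq_of_isMinUB hPik hz ▸ hBSG⟩

/-- For every chain `ω` in `Pik k m`, the union of the sets of factors
(maximal elements of `G` below the members of the chain) is a face of the complex of
k-trees. -/
theorem stmt15 (k m : ℕ) (hk : 1 ≤ k) (hm : m ≡ 1 [MOD k])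
    (ω : Set (Setoid (Fin m))) (hω : ω ⊆ Pik k m) (hchain : IsChain (· ≤ ·) ω) :
    memN k m (⋃ x ∈ ω, maxBelow (BSG k m) x) :=
  stmt15_general k m ω hω hchain
end
end
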